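/- Let k ≥ 2 and n ≥ 2 be integers such that k is a power of an odd prime and n ≡ 2 (mod 2k), and let L be a graph of order n with exactly one edge. Then there is no k-star decomposition of the join L ∨ K_s for any nonnegative integer s < 2k − 2. -/

import Mathlib

/-- The star with centre `c` and leaf set `Lf` is a `k`-star in `G`. -/
def IsStarIn {V : Type*} (G : SimpleGraph V) (k : ℕ) (c : V) (Lf : Finset V) : Prop :=
  Lf.card = k ∧ ∀ v ∈ Lf, G.Adj c v

/-- The edge set of the star with centre `c` and leaf set `Lf`. -/
def starEdges {V : Type*} [DecidableEq V] (c : V) (Lf : Finset V) : Finset (Sym2 V) :=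
  Lf.image (fun v => s(c, v))

/-- A partial `k`-star decomposition of `G`: a set of `k`-stars of `G` whose edge sets are
pairwise disjoint. -/
def IsPartialStarDecompOn {V : Type*} [DecidableEq V] (G : SimpleGraph V) (k : ℕ)
    (D : Finset (V × Finset V)) : Prop :=
  (∀ p ∈ D, IsStarIn G k p.1 p.2) ∧
  (∀ p ∈ D, ∀ q ∈ D, p ≠ q → Disjoint (starEdges p.1 p.2) (starEdges q.1 q.2))

/-- A `k`-star decomposition of `G`: a partial one whose stars' edge sets cover `E(G)`. -/
def IsStarDecompOn {V : Type*} [DecidableEq V] (G : SimpleGraph V) (k : ℕ)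
    (D : Finset (V × Finset V)) : Prop :=
  IsPartialStarDecompOn G k D ∧ ∀ e ∈ G.edgeSet, ∃ p ∈ D, e ∈ starEdges p.1 p.2

/-- The leave of a partial star decomposition `D` of `G`: the graph on `V(G)` consisting of
the edges of `G` lying in no star of `D`. -/
def leaveOf {V : Type*} [DecidableEq V] (G : SimpleGraph V) (D : Finset (V × Finset V)) :
    SimpleGraph V :=
  G.deleteEdges ↑(D.biUnion fun p => starEdges p.1 p.2)

/-- The join `L ∨ K_s` of `L` with a complete graph on `s` new vertices. -/
def joinK {V : Type*} (L : SimpleGraph V) (s : ℕ) : SimpleGraph (V ⊕ Fin s) where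
  Adj x y := x ≠ y ∧ ∀ a b, x = Sum.inl a → y = Sum.inl b → L.Adj a b
  symm := by
    constructor
    rintro x y ⟨hxy, h⟩
    exact ⟨hxy.symm, fun a b ha hb => (h b a hb ha).symm⟩
  loopless := by constructor; rintro x ⟨h, -⟩; exact h rfl

/-- The independence number `α(L)` of a graph `L`. -/
noncomputable def indepNumber {V : Type*} [Fintype V] (L : SimpleGraph V) : ℕ :=
  sSup {m : ℕ | ∃ t : Finset V, t.card = m ∧ ∀ x ∈ t, ∀ y ∈ t, x ≠ y → ¬ L.Adj x y}

/-- Push a star on `Fin n` forward to `Fin N` along the canonical inclusion. -/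
def castStar {n N : ℕ} (h : n ≤ N) (p : Fin n × Finset (Fin n)) :
    Fin N × Finset (Fin N) :=
  (Fin.castLE h p.1, p.2.image (Fin.castLE h))

/-- The partial `k`-star decomposition `A` of `K_n` can be embedded in a `k`-star
decomposition of `K_{n+s}`. -/
def EmbedsIn (k n s : ℕ) (A : Finset (Fin n × Finset (Fin n))) : Prop :=
  ∃ B : Finset (Fin (n + s) × Finset (Fin (n + s))),
    IsStarDecompOn (⊤ : SimpleGraph (Fin (n + s))) k B ∧
    A.image (castStar (Nat.le_add_right n s)) ⊆ B

/-- `Δ_T = |E_T| - k·∑_{x∈T} γ(x)`, where `E_T` is the set of edges of `G` incident with at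
least one vertex of `T`. -/
noncomputable def starDelta {V : Type*} (G : SimpleGraph V) (k : ℕ) (γ : V → ℕ)
    (T : Finset V) : ℤ :=
  ({e ∈ G.edgeSet | ∃ v ∈ T, v ∈ e}.ncard : ℤ) - k * ∑ x ∈ T, γ x

/-!
Let `ab` be the edge of `L` and `n = |V|`. If `s ≥ k`, then `k` divides the number of edges
`1 + n s + C(s, 2) ≡ C(s + 2, 2) (mod k)`; but `k` is a prime power and the coprime numbers `s + 1`,
`s + 2` lie strictly between `k` and `2k`. If `s < k`, the star containing `ab` is centred at an
end, say `a`, of degree `s + 1`; so `k = s + 1` and that star uses every edge at `a`. Counting the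
edges at a clique vertex `w` star by star, `deg w = k · #(stars centred at w) + #(stars with leaf w)`.
Here `deg w = n + s - 1 ≡ 0 (mod k)`, while the stars with leaf `w` are at least one (the star at
`a`) and at most `s`, since their centres are distinct vertices among `a` and the other clique
vertices.
-/

open Finset SimpleGraph Sum

section StarDecomposition

variable {V : Type*} {G : SimpleGraph V} {k : ℕ}

lemma IsStarIn.subset_neighborFinset {c : V} {Lf : Finset V} [Fintype (G.neighborSet c)]
    (h : IsStarIn G k c Lf) : Lf ⊆ G.neighborFinset c :=
  fun v hv => (mem_neighborFinset G c v).mpr (h.2 v hv)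

lemma IsStarIn.le_degree {c : V} {Lf : Finset V} [Fintype (G.neighborSet c)]
    (h : IsStarIn G k c Lf) : k ≤ G.degree c := by
  rw [← card_neighborFinset_eq_degree, ← h.1]
  exact card_le_card h.subset_neighborFinset

lemma IsStarIn.eq_neighborFinset {c : V} {Lf : Finset V} [Fintype (G.neighborSet c)]
    (h : IsStarIn G k c Lf) (hc : G.degree c ≤ k) : Lf = G.neighborFinset c :=
  eq_of_subset_of_card_le h.subset_neighborFinset (by rwa [card_neighborFinset_eq_degree, h.1])

variable [DecidableEq V]

lemma mem_starEdges {c : V} {Lf : Finset V} {e : Sym2 V} :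
    e ∈ starEdges c Lf ↔ ∃ v ∈ Lf, s(c, v) = e :=
  mem_image

lemma card_starEdges (c : V) (Lf : Finset V) : #(starEdges c Lf) = #Lf :=
  card_image_of_injective _ fun _ _ h => Sym2.congr_right.mp h

variable {D : Finset (V × Finset V)}

lemma IsPartialStarDecompOn.eq_of_mem_starEdges (hD : IsPartialStarDecompOn G k D)
    {p q : V × Finset V} (hp : p ∈ D) (hq : q ∈ D) {e : Sym2 V}
    (hep : e ∈ starEdges p.1 p.2) (heq : e ∈ starEdges q.1 q.2) : p = q := by
  by_contra hpq
  exact disjoint_left.mp (hD.2 p hp q hq hpq) hep heq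

lemma IsPartialStarDecompOn.fst_notMem_of_fst_mem (hD : IsPartialStarDecompOn G k D)
    {p q : V × Finset V} (hp : p ∈ D) (hq : q ∈ D) (h : q.1 ∈ p.2) : p.1 ∉ q.2 := by
  intro h'
  have hpq : p = q := hD.eq_of_mem_starEdges hp hq (mem_starEdges.mpr ⟨q.1, h, rfl⟩)
    (mem_starEdges.mpr ⟨p.1, h', Sym2.eq_swap⟩)
  subst hpq
  exact G.loopless.irrefl _ ((hD.1 p hp).2 _ h')

lemma IsPartialStarDecompOn.injOn_fst (hD : IsPartialStarDecompOn G k D) (w : V) :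
    Set.InjOn Prod.fst (↑{p ∈ D | w ∈ p.2} : Set (V × Finset V)) := by
  intro p hp q hq hpq
  simp only [coe_filter, Set.mem_ofPred_eq] at hp hq
  exact hD.eq_of_mem_starEdges hp.1 hq.1 (mem_starEdges.mpr ⟨w, hp.2, rfl⟩)
    (mem_starEdges.mpr ⟨w, hq.2, by rw [hpq]⟩)

lemma IsPartialStarDecompOn.card_biUnion_snd (hD : IsPartialStarDecompOn G k D) (w : V) :
    #({p ∈ D | p.1 = w}.biUnion Prod.snd) = k * #{p ∈ D | p.1 = w} := by
  rw [card_biUnion, sum_const_nat fun p hp => (hD.1 p (mem_filter.mp hp).1).1, mul_comm]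
  intro p hp q hq hpq
  simp only [coe_filter, Set.mem_ofPred_eq] at hp hq
  rw [Function.onFun, Finset.disjoint_left]
  intro v hvp hvq
  exact hpq (hD.eq_of_mem_starEdges hp.1 hq.1 (mem_starEdges.mpr ⟨v, hvp, rfl⟩)
    (mem_starEdges.mpr ⟨v, hvq, by rw [hp.2, hq.2]⟩))

lemma IsStarDecompOn.exists_of_adj (hD : IsStarDecompOn G k D) {u v : V} (h : G.Adj u v) :
    ∃ p ∈ D, p.1 = u ∧ v ∈ p.2 ∨ p.1 = v ∧ u ∈ p.2 := by
  obtain ⟨p, hp, he⟩ := hD.2 s(u, v) h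
  obtain ⟨x, hx, hpx⟩ := mem_starEdges.mp he
  refine ⟨p, hp, ?_⟩
  rcases Sym2.eq_iff.mp hpx with ⟨rfl, rfl⟩ | ⟨rfl, rfl⟩
  · exact Or.inl ⟨rfl, hx⟩
  · exact Or.inr ⟨rfl, hx⟩

lemma IsStarDecompOn.card_edgeFinset [Fintype G.edgeSet] (hD : IsStarDecompOn G k D) :
    #G.edgeFinset = k * #D := by
  have hE : G.edgeFinset = D.biUnion fun p => starEdges p.1 p.2 := by
    ext e
    simp only [mem_edgeFinset, mem_biUnion]
    refine ⟨hD.2 e, ?_⟩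
    rintro ⟨p, hp, he⟩
    obtain ⟨v, hv, rfl⟩ := mem_starEdges.mp he
    exact (hD.1.1 p hp).2 v hv
  rw [hE, card_biUnion fun p hp q hq => hD.1.2 p hp q hq,
    sum_const_nat fun p hp => (card_starEdges _ _).trans (hD.1.1 p hp).1, mul_comm]

lemma IsStarDecompOn.neighborFinset_eq (hD : IsStarDecompOn G k D) (w : V)
    [Fintype (G.neighborSet w)] : G.neighborFinset w =
      {p ∈ D | p.1 = w}.biUnion Prod.snd ∪ {p ∈ D | w ∈ p.2}.image Prod.fst := by
  ext u
  simp only [mem_neighborFinset, mem_union, mem_biUnion, mem_filter, mem_image]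
  constructor
  · intro h
    obtain ⟨p, hp, ⟨rfl, hu⟩ | ⟨rfl, hw⟩⟩ := hD.exists_of_adj h
    · exact Or.inl ⟨p, ⟨hp, rfl⟩, hu⟩
    · exact Or.inr ⟨p, ⟨hp, hw⟩, rfl⟩
  · rintro (⟨p, ⟨hp, rfl⟩, hu⟩ | ⟨p, ⟨hp, hw⟩, rfl⟩)
    · exact (hD.1.1 p hp).2 u hu
    · exact ((hD.1.1 p hp).2 w hw).symm

lemma IsStarDecompOn.degree_eq (hD : IsStarDecompOn G k D) (w : V)
    [Fintype (G.neighborSet w)] : G.degree w = k * #{p ∈ D | p.1 = w} + #{p ∈ D | w ∈ p.2} := by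
  rw [← card_neighborFinset_eq_degree, hD.neighborFinset_eq w, card_union_of_disjoint,
    hD.1.card_biUnion_snd, card_image_of_injOn (hD.1.injOn_fst w)]
  simp only [Finset.disjoint_left, mem_biUnion, mem_filter, mem_image, not_exists, not_and]
  rintro u ⟨q, ⟨hq, rfl⟩, hu⟩ p ⟨hp, hw⟩ rfl
  exact hD.1.fst_notMem_of_fst_mem hp hq hw hu

end StarDecomposition

lemma choose_two_mul_two (n : ℕ) : n.choose 2 * 2 = n * (n - 1) := by
  rw [Nat.choose_two_right, Nat.div_mul_cancel (Nat.even_mul_pred_self n).two_dvd]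

lemma choose_two_add_two (n : ℕ) : (n + 2).choose 2 = 1 + 2 * n + n.choose 2 := by
  simp [Nat.choose_succ_succ']
  omega

lemma IsPrimePow.not_dvd_choose_two {k m : ℕ} (hk : IsPrimePow k) (hkm : k + 2 ≤ m)
    (hm : m < 2 * k) : ¬ k ∣ m.choose 2 := by
  intro h
  have hcop : Nat.Coprime m (m - 1) :=
    (Nat.coprime_self_sub_right (by omega)).mpr (Nat.coprime_one_right m)
  rcases (hcop.isPrimePow_dvd_mul hk).mp (h.trans (Dvd.intro 2 (choose_two_mul_two m))) with
    h' | h'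
  · exact absurd (Nat.eq_of_dvd_of_lt_two_mul (by omega) h' hm) (by omega)
  · exact absurd (Nat.eq_of_dvd_of_lt_two_mul (by omega) h' (by omega)) (by omega)

section Join

variable {V : Type*} {L : SimpleGraph V} {s : ℕ}

@[simp]
lemma joinK_adj_inl_inl {u v : V} : (joinK L s).Adj (inl u) (inl v) ↔ L.Adj u v :=
  ⟨fun h => h.2 u v rfl rfl, fun h => ⟨by simpa using h.ne, by rintro _ _ ⟨⟩ ⟨⟩; exact h⟩⟩

@[simp]
lemma joinK_adj_inl_inr {u : V} {x : Fin s} : (joinK L s).Adj (inl u) (inr x) :=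
  ⟨by simp, by rintro _ _ - ⟨⟩⟩

@[simp]
lemma joinK_adj_inr_inl {u : V} {x : Fin s} : (joinK L s).Adj (inr x) (inl u) :=
  joinK_adj_inl_inr.symm

@[simp]
lemma joinK_adj_inr_inr {x y : Fin s} : (joinK L s).Adj (inr x) (inr y) ↔ x ≠ y :=
  ⟨fun h hxy => h.1 (hxy ▸ rfl), fun h => ⟨by simpa using h, by rintro _ _ ⟨⟩⟩⟩

instance [DecidableRel L.Adj] : DecidableRel (joinK L s).Adj
  | inl _, inl _ => decidable_of_iff _ joinK_adj_inl_inl.symm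
  | inl _, inr _ => isTrue joinK_adj_inl_inr
  | inr _, inl _ => isTrue joinK_adj_inr_inl
  | inr _, inr _ => decidable_of_iff _ joinK_adj_inr_inr.symm

variable [Fintype V] [DecidableRel L.Adj]

lemma neighborFinset_joinK_inl (u : V) :
    (joinK L s).neighborFinset (inl u) = (L.neighborFinset u).disjSum univ := by
  ext (v | y) <;> simp

lemma neighborFinset_joinK_inr (x : Fin s) :
    (joinK L s).neighborFinset (inr x) = univ.disjSum (univ.erase x) := by
  ext (v | y) <;> simp [eq_comm]

lemma degree_joinK_inl (u : V) : (joinK L s).degree (inl u) = L.degree u + s := by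
  rw [← card_neighborFinset_eq_degree, neighborFinset_joinK_inl, card_disjSum,
    card_neighborFinset_eq_degree, card_univ, Fintype.card_fin]

lemma degree_joinK_inr (x : Fin s) :
    (joinK L s).degree (inr x) = Fintype.card V + (s - 1) := by
  rw [← card_neighborFinset_eq_degree, neighborFinset_joinK_inr, card_disjSum, card_univ,
    card_erase_of_mem (mem_univ x), card_univ, Fintype.card_fin]

lemma card_edgeFinset_joinK [DecidableEq V] :
    #(joinK L s).edgeFinset = #L.edgeFinset + Fintype.card V * s + s.choose 2 := by
  have h := (joinK L s).sum_degrees_eq_twice_card_edges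
  simp only [Fintype.sum_sum_type, degree_joinK_inl, degree_joinK_inr, sum_add_distrib,
    L.sum_degrees_eq_twice_card_edges, sum_const, card_univ, Fintype.card_fin, smul_eq_mul] at h
  have hs := choose_two_mul_two s
  rcases s with _ | s
  · simpa using h.symm
  · simp only [Nat.add_sub_cancel] at h hs
    linarith

end Join

section Edge

variable {V : Type*}

lemma exists_eq_edge_of_ncard_edgeSet_eq_one {G : SimpleGraph V} (h : G.edgeSet.ncard = 1) :
    ∃ a b, a ≠ b ∧ G = edge a b := by
  obtain ⟨e, he⟩ := Set.ncard_eq_one.mp h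
  induction e using Sym2.ind with
  | _ a b =>
    have hab : a ≠ b := G.ne_of_adj (by rw [← mem_edgeSet, he]; rfl)
    exact ⟨a, b, hab, edgeSet_inj.mp (by rw [he, edgeSet_edge_of_ne hab])⟩

variable [Fintype V] [DecidableEq V] {a b : V}

lemma degree_edge_left (hab : a ≠ b) : (edge a b).degree a = 1 := by
  rw [← card_neighborFinset_eq_degree, card_eq_one]
  exact ⟨b, by ext v; simp [edge_adj, hab, eq_comm]; rintro rfl; exact hab⟩

lemma degree_edge_right (hab : a ≠ b) : (edge a b).degree b = 1 := by
  rw [← card_neighborFinset_eq_degree, card_eq_one]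
  exact ⟨a, by ext v; simp [edge_adj, hab.symm, eq_comm]; rintro rfl; exact hab.symm⟩

lemma eq_or_eq_of_degree_edge_pos {v : V} (h : 0 < (edge a b).degree v) : v = a ∨ v = b := by
  obtain ⟨w, hw⟩ := (degree_pos_iff_exists_adj _ v).mp h
  rcases ((edge_adj a b v w).mp hw).1 with ⟨rfl, -⟩ | ⟨rfl, -⟩
  · exact Or.inl rfl
  · exact Or.inr rfl

end Edge

section JoinEdge

variable {V : Type*} [Fintype V] [DecidableEq V] {a b : V} {k s : ℕ}
  {D : Finset ((V ⊕ Fin s) × Finset (V ⊕ Fin s))}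

/-- Both ends of the edge `ab` have degree `s + 1 = k`, so a star centred at either of them
contains `ab`; hence at most one of them is a centre. -/
lemma IsStarDecompOn.eq_of_inl_mem_joinK_edge (hD : IsStarDecompOn (joinK (edge a b) s) k D)
    (hab : a ≠ b) (hks : k = s + 1) {Lf : Finset (V ⊕ Fin s)} (ha : (inl a, Lf) ∈ D) {v : V}
    {Lf' : Finset (V ⊕ Fin s)} (hv : (inl v, Lf') ∈ D) : v = a := by
  have hstar := hD.1.1 _ hv
  have hdeg := hstar.le_degree
  rw [degree_joinK_inl] at hdeg
  rcases eq_or_eq_of_degree_edge_pos (by omega : 0 < (edge a b).degree v) with rfl | rfl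
  · rfl
  · have hLf : Lf = (joinK (edge a v) s).neighborFinset (inl a) :=
      (hD.1.1 _ ha).eq_neighborFinset (by rw [degree_joinK_inl, degree_edge_left hab]; omega)
    have hLf' : Lf' = (joinK (edge a v) s).neighborFinset (inl v) :=
      hstar.eq_neighborFinset (by rw [degree_joinK_inl, degree_edge_right hab]; omega)
    refine absurd ?_ (hD.1.fst_notMem_of_fst_mem ha hv ?_)
    · simp [hLf', edge_adj, hab.symm]
    · simp [hLf, edge_adj, hab]

theorem not_isStarDecompOn_joinK_edge (hab : a ≠ b) (hk : 2 ≤ k) (hsk : s < k)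
    (hn : Fintype.card V ≡ 2 [MOD k]) : ¬ IsStarDecompOn (joinK (edge a b) s) k D := by
  intro hD
  wlog ha : ∃ Lf, (inl a, Lf) ∈ D generalizing a b
  · have hadj : (joinK (edge a b) s).Adj (inl a) (inl b) := by simp [edge_adj, hab]
    obtain ⟨p, hp, ⟨hpa, -⟩ | ⟨hpb, -⟩⟩ := hD.exists_of_adj hadj
    · exact ha ⟨p.2, hpa ▸ hp⟩
    · exact this hab.symm (edge_comm a b ▸ hD) ⟨p.2, hpb ▸ hp⟩
  obtain ⟨Lf, ha⟩ := ha
  have hks : k = s + 1 := by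
    have := (hD.1.1 _ ha).le_degree
    rw [degree_joinK_inl, degree_edge_left hab] at this
    omega
  obtain ⟨x⟩ : Nonempty (Fin s) := ⟨⟨0, by omega⟩⟩
  have hdvd : k ∣ #{p ∈ D | inr x ∈ p.2} := by
    have hdeg : k ∣ (joinK (edge a b) s).degree (inr x) := by
      rw [degree_joinK_inr, ← Nat.modEq_zero_iff_dvd]
      have h2 : 2 + (s - 1) = k := by omega
      exact (hn.add_right _).trans (h2 ▸ Nat.modEq_zero_iff_dvd.mpr dvd_rfl)
    rw [hD.degree_eq] at hdeg
    exact (Nat.dvd_add_right (dvd_mul_right _ _)).mp hdeg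
  have hpos : 0 < #{p ∈ D | inr x ∈ p.2} := by
    refine card_pos.mpr ⟨_, mem_filter.mpr ⟨ha, ?_⟩⟩
    rw [(hD.1.1 _ ha).eq_neighborFinset (by rw [degree_joinK_inl, degree_edge_left hab]; omega)]
    simp
  have hle : #{p ∈ D | inr x ∈ p.2} ≤ s := by
    calc _ ≤ #(({a} : Finset V).disjSum (univ.erase x)) :=
          card_le_card_of_injOn Prod.fst ?_ (hD.1.injOn_fst _)
      _ = s := by rw [card_disjSum, card_singleton, card_erase_of_mem (mem_univ x), card_univ,
          Fintype.card_fin]; omega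
    rintro ⟨c, Lf'⟩ hp
    simp only [coe_filter, Set.mem_ofPred_eq] at hp
    have hadj := (hD.1.1 _ hp.1).2 _ hp.2
    rcases c with v | y
    · simp [hD.eq_of_inl_mem_joinK_edge hab hks ha hp.1]
    · simpa [eq_comm] using hadj
  exact absurd (Nat.le_of_dvd hpos hdvd) (by omega)

end JoinEdge

theorem stmt9_general {V : Type*} [Fintype V] [DecidableEq V] (k n : ℕ)
    (hkpp : ∃ p i : ℕ, p.Prime ∧ Odd p ∧ k = p ^ i)
    (hmod : n % (2 * k) = 2)
    (hV : Fintype.card V = n) (L : SimpleGraph V) (hL : L.edgeSet.ncard = 1) :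
    ∀ s : ℕ, s < 2 * k - 2 → ¬ ∃ D, IsStarDecompOn (joinK L s) k D := by
  classical
  rintro s hs ⟨D, hD⟩
  have hk : 2 ≤ k := by omega
  have hn : n ≡ 2 [MOD k] := by
    rw [Nat.ModEq, ← Nat.mod_mod_of_dvd n (dvd_mul_left k 2), hmod]
  rcases lt_or_ge s k with hsk | hks
  · obtain ⟨a, b, hab, rfl⟩ := exists_eq_edge_of_ncard_edgeSet_eq_one hL
    exact not_isStarDecompOn_joinK_edge hab hk hsk (hV ▸ hn) hD
  · obtain ⟨p, i, hp, -, rfl⟩ := hkpp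
    have hpow : IsPrimePow (p ^ i) := hp.isPrimePow.pow (by rintro rfl; simp at hk)
    refine hpow.not_dvd_choose_two (m := s + 2) (by omega) (by omega) ?_
    have hL' : #L.edgeFinset = 1 := by rw [← Set.ncard_coe_finset, coe_edgeFinset, hL]
    have hE := hD.card_edgeFinset
    rw [card_edgeFinset_joinK, hL', hV] at hE
    rw [choose_two_add_two, ← Nat.modEq_zero_iff_dvd]
    exact (((hn.mul_right s).add_left 1).add_right _).symm.trans
      (Nat.modEq_zero_iff_dvd.mpr (hE ▸ dvd_mul_right _ _))

/-- for `k ≥ 2` a power of an odd prime, `n ≡ 2 (mod 2k)`, `n ≥ 2`, and `L` of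
order `n` with exactly one edge, `L ∨ K_s` has no `k`-star decomposition for any
`s < 2k - 2`. -/
theorem stmt9 {V : Type*} [Fintype V] [DecidableEq V] (k n : ℕ) (hk : 2 ≤ k) (hn : 2 ≤ n)
    (hkpp : ∃ p i : ℕ, p.Prime ∧ Odd p ∧ k = p ^ i)
    (hmod : n % (2 * k) = 2)
    (hV : Fintype.card V = n) (L : SimpleGraph V) (hL : L.edgeSet.ncard = 1) :
    ∀ s : ℕ, s < 2 * k - 2 → ¬ ∃ D, IsStarDecompOn (joinK L s) k D :=
  stmt9_general k n hkpp hmod hV L hL
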